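/- Let F be a finitely generated free group and φ : F → F an automorphism with semidirect product G = F ⋊_φ ℤ. Then the profinite completion Ĝ fits in a short exact sequence of profinite groups 1 → F̂ → Ĝ → Ẑ → 1, i.e., the closure of F in Ĝ is isomorphic to the profinite completion F̂ of F. -/

import Mathlib

/-- The directed system indexing the profinite completion: finite-index normal subgroups. -/
structure NormalFI (G : Type*) [Group G] where
  N : Subgroup G
  normal : N.Normal
  fi : N.FiniteIndex

instance {G : Type*} [Group G] (i : NormalFI G) : i.N.Normal := i.normal
instance {G : Type*} [Group G] (i : NormalFI G) : TopologicalSpace (G ⧸ i.N) := ⊥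
instance {G : Type*} [Group G] (i : NormalFI G) : DiscreteTopology (G ⧸ i.N) := ⟨rfl⟩

/-- The transition map of the system, for `i.N ≤ j.N`. -/
def NormalFI.transMap {G : Type*} [Group G] {i j : NormalFI G} (h : i.N ≤ j.N) :
    G ⧸ i.N →* G ⧸ j.N :=
  QuotientGroup.map i.N j.N (MonoidHom.id G) (fun g hg => h hg)

/-- The subgroup of compatible sequences in `∏ G/N`. -/
def profSubgroup (G : Type*) [Group G] : Subgroup (∀ i : NormalFI G, G ⧸ i.N) where
  carrier := {x | ∀ (i j : NormalFI G) (h : i.N ≤ j.N), NormalFI.transMap h (x i) = x j}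
  one_mem' := by intro i j h; rw [Pi.one_apply, Pi.one_apply, map_one]
  mul_mem' := by
    intro x y hx hy i j h
    rw [Pi.mul_apply, Pi.mul_apply, map_mul, hx i j h, hy i j h]
  inv_mem' := by intro x hx i j h; rw [Pi.inv_apply, Pi.inv_apply, map_inv, hx i j h]

/-- The profinite completion of a group: the inverse limit of its finite quotients. -/
def ProfiniteCompletion (G : Type*) [Group G] : Type _ := profSubgroup G

instance (G : Type*) [Group G] : Group (ProfiniteCompletion G) :=
  inferInstanceAs (Group (profSubgroup G))

instance (G : Type*) [Group G] : TopologicalSpace (ProfiniteCompletion G) :=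
  inferInstanceAs (TopologicalSpace (profSubgroup G))

/-- The canonical map from a group to its profinite completion. -/
def completionMap (G : Type*) [Group G] : G →* ProfiniteCompletion G :=
  MonoidHom.mk' (fun g => ⟨fun _ => QuotientGroup.mk g, fun _ _ _ => rfl⟩)
    (fun _ _ => rfl)

/-- The mapping-torus group `F ⋊_φ ℤ` of an automorphism `φ` of the finitely generated
free group `F = F_n`. -/
abbrev MappingTorusGrp (n : ℕ) (φ : MulAut (FreeGroup (Fin n))) : Type :=
  SemidirectProduct (FreeGroup (Fin n)) (Multiplicative ℤ)
    (zpowersHom (MulAut (FreeGroup (Fin n))) φ)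

section Generic
variable {G : Type*} [Group G]

/-- The underlying compatible sequence of an element of the profinite completion. -/
def PCval {G : Type*} [Group G] (ξ : ProfiniteCompletion G) : ∀ i : NormalFI G, G ⧸ i.N :=
  Subtype.val (p := fun x : ∀ i : NormalFI G, G ⧸ i.N => x ∈ profSubgroup G) ξ

lemma PCval_prop (ξ : ProfiniteCompletion G) (i j : NormalFI G) (h : i.N ≤ j.N) :
    NormalFI.transMap h (PCval ξ i) = PCval ξ j :=
  (Subtype.prop (p := fun x : ∀ i : NormalFI G, G ⧸ i.N => x ∈ profSubgroup G) ξ) i j h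

lemma PCval_injective : Function.Injective (PCval (G := G)) :=
  fun _ _ h => Subtype.ext h

@[simp] lemma PCval_completionMap (g : G) (i : NormalFI G) :
    PCval (completionMap G g) i = QuotientGroup.mk g := rfl

@[simp] lemma PCval_one (i : NormalFI G) : PCval (1 : ProfiniteCompletion G) i = 1 := rfl

@[simp] lemma PCval_mul (ξ η : ProfiniteCompletion G) (i : NormalFI G) :
    PCval (ξ * η) i = PCval ξ i * PCval η i := rfl

instance : T2Space (ProfiniteCompletion G) :=
  inferInstanceAs (T2Space (profSubgroup G))

lemma profSubgroup_isClosed : IsClosed (profSubgroup G : Set (∀ i : NormalFI G, G ⧸ i.N)) := by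
  have : (profSubgroup G : Set (∀ i : NormalFI G, G ⧸ i.N)) =
      ⋂ (i : NormalFI G) (j : NormalFI G) (h : i.N ≤ j.N),
        {x | NormalFI.transMap h (x i) = x j} := by
    ext x; simp only [Set.mem_iInter, Set.mem_setOf_eq, SetLike.mem_coe]; rfl
  rw [this]
  refine isClosed_iInter fun i => isClosed_iInter fun j => isClosed_iInter fun h => ?_
  haveI : Finite (G ⧸ j.N) := @Subgroup.finite_quotient_of_finiteIndex _ _ _ j.fi
  exact isClosed_eq ((continuous_of_discreteTopology).comp (continuous_apply i))
    (continuous_apply j)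

instance : CompactSpace (ProfiniteCompletion G) := by
  haveI : ∀ i : NormalFI G, Finite (G ⧸ i.N) :=
    fun i => @Subgroup.finite_quotient_of_finiteIndex _ _ _ i.fi
  exact isCompact_iff_compactSpace.mp profSubgroup_isClosed.isCompact

/-- coordinate evaluation is continuous -/
lemma continuous_coord (i : NormalFI G) :
    Continuous (fun ξ : ProfiniteCompletion G => PCval ξ i) :=
  (continuous_apply i).comp continuous_subtype_val

lemma normal_iInf {ι : Type*} (f : ι → Subgroup G) (h : ∀ i, (f i).Normal) :
    (⨅ i, f i).Normal := by
  constructor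
  intro x hx g
  rw [Subgroup.mem_iInf] at hx ⊢
  exact fun i => (h i).conj_mem _ (hx i) g

/-- The inf of a finite family of finite index normal subgroups, as a `NormalFI`. -/
noncomputable def NormalFI.inter (I : Finset (NormalFI G)) : NormalFI G where
  N := ⨅ i : I, (i : NormalFI G).N
  normal := normal_iInf _ fun i => (i : NormalFI G).normal
  fi := Subgroup.finiteIndex_iInf fun i => (i : NormalFI G).fi

lemma NormalFI.inter_le {I : Finset (NormalFI G)} {i : NormalFI G} (hi : i ∈ I) :
    (NormalFI.inter I).N ≤ i.N := iInf_le _ (⟨i, hi⟩ : I)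

lemma denseRange_completionMap : DenseRange (completionMap G) := by
  intro ξ
  rw [mem_closure_iff]
  intro o ho hξ
  obtain ⟨V, hV, rfl⟩ := isOpen_induced_iff.mp ho
  obtain ⟨I, u, hu, hpi⟩ := isOpen_pi_iff.mp hV _ hξ
  obtain ⟨g, hg⟩ := QuotientGroup.mk_surjective (PCval ξ (NormalFI.inter I))
  refine ⟨completionMap G g, ?_, Set.mem_range_self g⟩
  refine hpi fun i hi => ?_
  have : PCval (completionMap G g) i = PCval ξ i := by
    rw [← PCval_prop ξ (NormalFI.inter I) i (NormalFI.inter_le hi), ← hg]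
    rfl
  show PCval (completionMap G g) i ∈ u i
  rw [this]
  exact (hu i hi).2

end Generic

section Natural
variable {G H : Type*} [Group G] [Group H]

/-- Pull back a finite-index normal subgroup along a homomorphism. -/
def NormalFI.comap (f : G →* H) (j : NormalFI H) : NormalFI G where
  N := j.N.comap f
  normal := j.normal.comap f
  fi := by
    constructor
    rw [Subgroup.index_comap]
    intro h0
    exact j.fi.index_ne_zero (zero_dvd_iff.mp (h0 ▸ Subgroup.relIndex_dvd_index_of_normal j.N _))

/-- The induced map on quotients, from the comap level. -/
def NormalFI.qmap (f : G →* H) (j : NormalFI H) :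
    G ⧸ (NormalFI.comap f j).N →* H ⧸ j.N :=
  QuotientGroup.map _ _ f (fun _ hx => hx)

lemma NormalFI.qmap_mk (f : G →* H) (j : NormalFI H) (g : G) :
    NormalFI.qmap f j (QuotientGroup.mk g) = QuotientGroup.mk (f g) := rfl

lemma NormalFI.qmap_injective (f : G →* H) (j : NormalFI H) :
    Function.Injective (NormalFI.qmap f j) := by
  rw [injective_iff_map_eq_one]
  intro x hx
  induction x using QuotientGroup.induction_on with
  | H g =>
    rw [NormalFI.qmap_mk, QuotientGroup.eq_one_iff] at hx
    rwa [QuotientGroup.eq_one_iff]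

/-- Naturality: a continuous hom of profinite completions compatible with `f` on the dense
image is computed coordinatewise by `qmap`. -/
lemma coord_formula (f : G →* H) (ρ : ProfiniteCompletion G →* ProfiniteCompletion H)
    (hρc : Continuous ρ)
    (hρ : ∀ g : G, ρ (completionMap G g) = completionMap H (f g))
    (ξ : ProfiniteCompletion G) (j : NormalFI H) :
    PCval (ρ ξ) j = NormalFI.qmap f j (PCval ξ (NormalFI.comap f j)) := by
  haveI : Finite (H ⧸ j.N) := @Subgroup.finite_quotient_of_finiteIndex _ _ _ j.fi
  have hA : Continuous (fun ξ : ProfiniteCompletion G => PCval (ρ ξ) j) :=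
    (continuous_coord j).comp hρc
  have hB : Continuous (fun ξ : ProfiniteCompletion G =>
      NormalFI.qmap f j (PCval ξ (NormalFI.comap f j))) :=
    continuous_of_discreteTopology.comp (continuous_coord _)
  have := Continuous.ext_on (denseRange_completionMap (G := G)) hA hB ?_
  · exact congrFun this ξ
  · rintro _ ⟨g, rfl⟩
    simp only [hρ, PCval_completionMap, NormalFI.qmap_mk]

end Natural

section Separable

open SemidirectProduct

variable {n : ℕ}

lemma finite_homs (Q : Type*) [Group Q] [Finite Q] : Finite (FreeGroup (Fin n) →* Q) :=
  Finite.of_surjective (fun f : Fin n → Q => FreeGroup.lift f) FreeGroup.lift.surjective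

variable (φ : MulAut (FreeGroup (Fin n)))

local notation "F" => FreeGroup (Fin n)

/-- The characteristic core used for separability. -/
def charCore (i : NormalFI F) : Subgroup F :=
  ⨅ ψ : F →* (F ⧸ i.N), ψ.ker

lemma mem_charCore {i : NormalFI F} {x : F} :
    x ∈ charCore i ↔ ∀ ψ : F →* (F ⧸ i.N), ψ x = 1 := by
  simp [charCore, Subgroup.mem_iInf, MonoidHom.mem_ker]

lemma charCore_le (i : NormalFI F) : charCore i ≤ i.N := by
  intro x hx
  have := mem_charCore.mp hx (QuotientGroup.mk' i.N)
  rwa [← QuotientGroup.ker_mk' i.N, MonoidHom.mem_ker]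

lemma charCore_normal (i : NormalFI F) : (charCore i).Normal :=
  normal_iInf _ fun ψ => ψ.normal_ker

lemma charCore_char {i : NormalFI F} (e : MulAut F) {x : F} (hx : x ∈ charCore i) :
    e x ∈ charCore i := by
  rw [mem_charCore] at hx ⊢
  intro ψ
  exact hx (ψ.comp e.toMonoidHom)

lemma charCore_char_iff {i : NormalFI F} (e : MulAut F) {x : F} :
    e x ∈ charCore i ↔ x ∈ charCore i := by
  refine ⟨fun h => ?_, charCore_char e⟩
  have := charCore_char e⁻¹ h
  simpa using this

lemma charCore_finite_quotient (i : NormalFI F) : Finite (F ⧸ charCore i) := by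
  haveI : Finite (F ⧸ i.N) := @Subgroup.finite_quotient_of_finiteIndex _ _ _ i.fi
  haveI := finite_homs (n := n) (F ⧸ i.N)
  set Ψ : F →* ((F →* (F ⧸ i.N)) → (F ⧸ i.N)) :=
    { toFun := fun g ψ => ψ g
      map_one' := by funext ψ; simp
      map_mul' := by intro a b; funext ψ; simp } with hΨ
  have hker : Ψ.ker = charCore i := by
    ext x
    simp [hΨ, MonoidHom.mem_ker, mem_charCore, funext_iff]
  rw [← hker]
  exact Finite.of_equiv _ (QuotientGroup.quotientKerEquivRange Ψ).symm.toEquiv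

lemma charCore_fi (i : NormalFI F) : (charCore i).FiniteIndex :=
  haveI := charCore_finite_quotient i
  Subgroup.finiteIndex_of_finite_quotient

/-- There is a positive period `d` such that `φ ^ d` is the identity modulo the core. -/
lemma exists_period (i : NormalFI F) :
    ∃ d : ℕ, 0 < d ∧ ∀ a : F, a⁻¹ * (φ ^ (d : ℤ)) a ∈ charCore i := by
  haveI : (charCore i).Normal := charCore_normal i
  haveI := charCore_finite_quotient i
  haveI := finite_homs (n := n) (F ⧸ charCore i)
  obtain ⟨k, l, hkl, he⟩ := Finite.exists_ne_map_eq_of_infinite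
    (fun k : ℕ => (QuotientGroup.mk' (charCore i)).comp ((φ ^ (k : ℤ)) : MulAut F).toMonoidHom)
  wlog hlt : k < l generalizing k l
  · exact this l k hkl.symm he.symm (by omega)
  refine ⟨l - k, by omega, fun a => ?_⟩
  have := DFunLike.congr_fun he ((φ ^ (k : ℤ))⁻¹ a)
  simp only [MonoidHom.comp_apply] at this
  have h1 : (φ ^ (k : ℤ)) ((φ ^ (k : ℤ))⁻¹ a) = a := by
    rw [← MulAut.mul_apply, mul_inv_cancel, MulAut.one_apply]
  have h2 : (φ ^ (l : ℤ)) ((φ ^ (k : ℤ))⁻¹ a) = (φ ^ ((l - k : ℕ) : ℤ)) a := by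
    rw [← zpow_neg, ← MulAut.mul_apply, ← zpow_add]
    congr 2
    omega
  rw [show ((φ ^ (k:ℤ)) : MulAut F).toMonoidHom ((φ ^ (k : ℤ))⁻¹ a)
       = (φ ^ (k : ℤ)) ((φ ^ (k : ℤ))⁻¹ a) from rfl,
     show ((φ ^ (l:ℤ)) : MulAut F).toMonoidHom ((φ ^ (k : ℤ))⁻¹ a)
       = (φ ^ (l : ℤ)) ((φ ^ (k : ℤ))⁻¹ a) from rfl, h1, h2] at this
  have : (QuotientGroup.mk a : F ⧸ charCore i) = QuotientGroup.mk ((φ ^ ((l - k : ℕ) : ℤ)) a) :=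
    this
  rwa [QuotientGroup.eq] at this

lemma period_dvd (i : NormalFI F) {d : ℕ}
    (hd : ∀ a : F, a⁻¹ * (φ ^ (d : ℤ)) a ∈ charCore i) :
    ∀ t : ℤ, (d : ℤ) ∣ t → ∀ a : F, a⁻¹ * (φ ^ t) a ∈ charCore i := by
  set S : AddSubgroup ℤ :=
    { carrier := {t : ℤ | ∀ a : F, a⁻¹ * (φ ^ t) a ∈ charCore i}
      zero_mem' := by intro a; simpa using one_mem (charCore i)
      add_mem' := by
        intro s t hs ht a
        have h1 : a⁻¹ * (φ ^ s) a ∈ charCore i := hs a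
        have h2 : ((φ ^ s) a)⁻¹ * (φ ^ t) ((φ ^ s) a) ∈ charCore i := ht _
        have : a⁻¹ * (φ ^ (s + t)) a
            = (a⁻¹ * (φ ^ s) a) * (((φ ^ s) a)⁻¹ * (φ ^ t) ((φ ^ s) a)) := by
          rw [add_comm, zpow_add, MulAut.mul_apply]
          group
        rw [this]
        exact mul_mem h1 h2
      neg_mem' := by
        intro t ht a
        have := ht ((φ ^ (-t)) a)
        have h1 : (φ ^ t) ((φ ^ (-t)) a) = a := by
          rw [← MulAut.mul_apply, ← zpow_add]
          simp
        rw [h1] at this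
        have := inv_mem this
        simpa using this } with hS
  intro t htd a
  obtain ⟨c, rfl⟩ := htd
  have hdS : (d : ℤ) ∈ S := hd
  have : (d : ℤ) * c ∈ S := by
    have := AddSubgroup.zsmul_mem S hdS c
    simpa [smul_eq_mul, mul_comm] using this
  exact this a

/-- The finite-index normal subgroup of the mapping torus used for separability. -/
def torusSub (i : NormalFI (FreeGroup (Fin n))) {d : ℕ} (hd : ∀ a : F, a⁻¹ * (φ ^ (d : ℤ)) a ∈ charCore i) :
    Subgroup (MappingTorusGrp n φ) where
  carrier := {g | g.left ∈ charCore i ∧ (d : ℤ) ∣ Multiplicative.toAdd g.right}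
  one_mem' := by
    constructor
    · exact Subgroup.one_mem _
    · simp
  mul_mem' := by
    rintro a b ⟨ha1, ha2⟩ ⟨hb1, hb2⟩
    refine ⟨?_, ?_⟩
    · show (a * b).left ∈ charCore i
      rw [SemidirectProduct.mul_left]
      exact mul_mem ha1 (charCore_char _ hb1)
    · show (d : ℤ) ∣ Multiplicative.toAdd (a * b).right
      rw [SemidirectProduct.mul_right, toAdd_mul]
      exact dvd_add ha2 hb2
  inv_mem' := by
    rintro a ⟨ha1, ha2⟩
    refine ⟨?_, ?_⟩
    · show (a⁻¹).left ∈ charCore i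
      rw [SemidirectProduct.inv_left]
      exact charCore_char _ (inv_mem ha1)
    · show (d : ℤ) ∣ Multiplicative.toAdd (a⁻¹).right
      rw [SemidirectProduct.inv_right, toAdd_inv]
      exact dvd_neg.mpr ha2

section TS
variable (i : NormalFI (FreeGroup (Fin n))) {d : ℕ}

lemma mem_torusSub (hd : ∀ a : F, a⁻¹ * (φ ^ (d : ℤ)) a ∈ charCore i) {g : MappingTorusGrp n φ} :
    g ∈ torusSub φ i hd ↔ g.left ∈ charCore i ∧ (d : ℤ) ∣ Multiplicative.toAdd g.right :=
  Iff.rfl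

lemma torusSub_normal (hd : ∀ a : F, a⁻¹ * (φ ^ (d : ℤ)) a ∈ charCore i) (hdvd : ∀ t : ℤ, (d : ℤ) ∣ t → ∀ a : F, a⁻¹ * (φ ^ t) a ∈ charCore i) :
    (torusSub φ i hd).Normal := by
  constructor
  intro m hm g
  rw [mem_torusSub φ i hd] at hm ⊢
  obtain ⟨hm1, hm2⟩ := hm
  set α : Multiplicative ℤ →* MulAut F := zpowersHom (MulAut F) φ with hα
  have hr : (g * m * g⁻¹).right = m.right := by
    rw [SemidirectProduct.mul_right, SemidirectProduct.mul_right, SemidirectProduct.inv_right]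
    rw [mul_comm g.right m.right]
    exact mul_inv_cancel_right _ _
  refine ⟨?_, by rw [hr]; exact hm2⟩
  have hl : (g * m * g⁻¹).left
      = (g.left * (α g.right) m.left * g.left⁻¹) * (g.left * (α m.right) g.left⁻¹) := by
    rw [SemidirectProduct.mul_left, SemidirectProduct.mul_left, SemidirectProduct.inv_left,
      SemidirectProduct.mul_right]
    have : α (g.right * m.right) ((α g.right⁻¹) g.left⁻¹) = (α m.right) g.left⁻¹ := by
      rw [← MulAut.mul_apply, ← map_mul]
      congr 2
    rw [this]
    group
    rfl
  rw [hl]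
  refine mul_mem ((charCore_normal i).conj_mem _ (charCore_char _ hm1) g.left) ?_
  have := hdvd (Multiplicative.toAdd m.right) hm2 g.left⁻¹
  simpa [hα, zpowersHom_apply] using this

lemma torusSub_finite_quotient (hd : ∀ a : F, a⁻¹ * (φ ^ (d : ℤ)) a ∈ charCore i)
    (hdpos : 0 < d) :
    Finite (MappingTorusGrp n φ ⧸ torusSub φ i hd) := by
  haveI : (charCore i).Normal := charCore_normal i
  haveI := charCore_finite_quotient (n := n) i
  haveI : NeZero d := ⟨hdpos.ne'⟩
  set ψ : MappingTorusGrp n φ → (F ⧸ charCore i) × ZMod d :=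
    fun g => (QuotientGroup.mk g.left, ((Multiplicative.toAdd g.right : ℤ) : ZMod d)) with hψ
  have key : ∀ x y : MappingTorusGrp n φ, ψ x = ψ y ↔ x⁻¹ * y ∈ torusSub φ i hd := by
    intro x y
    set α : Multiplicative ℤ →* MulAut F := zpowersHom (MulAut F) φ with hα
    have hl : (x⁻¹ * y).left = (α x.right⁻¹) (x.left⁻¹ * y.left) := by
      rw [SemidirectProduct.mul_left, SemidirectProduct.inv_left, SemidirectProduct.inv_right,
        map_mul]
    have hr : Multiplicative.toAdd (x⁻¹ * y).right
        = Multiplicative.toAdd y.right - Multiplicative.toAdd x.right := by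
      rw [SemidirectProduct.mul_right, SemidirectProduct.inv_right]
      rw [mul_comm, toAdd_mul, toAdd_inv]
      ring
    rw [mem_torusSub φ i hd, hl, hr, charCore_char_iff, Prod.ext_iff]
    simp only [hψ]
    constructor
    · rintro ⟨h1, h2⟩
      refine ⟨?_, ?_⟩
      · exact QuotientGroup.eq.mp h1
      · rw [← Int.modEq_iff_dvd]
        exact (ZMod.intCast_eq_intCast_iff _ _ _).mp h2
    · rintro ⟨h1, h2⟩
      refine ⟨QuotientGroup.eq.mpr h1, ?_⟩
      exact (ZMod.intCast_eq_intCast_iff _ _ _).mpr (Int.modEq_iff_dvd.mpr h2)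
  have : Function.Injective (fun q : MappingTorusGrp n φ ⧸ torusSub φ i hd =>
      Quotient.lift ψ (fun a b h => (key a b).mpr (QuotientGroup.leftRel_apply.mp h)) q) := by
    intro q1 q2
    induction q1 using Quotient.ind
    induction q2 using Quotient.ind
    intro h
    exact Quotient.sound (QuotientGroup.leftRel_apply.mpr ((key _ _).mp h))
  exact Finite.of_injective _ this

/-- Separability: every finite-index normal subgroup of `F` contains the `F`-trace of a
finite-index normal subgroup of the mapping torus. -/
lemma exists_normalFI_comap_le :
    ∃ j : NormalFI (MappingTorusGrp n φ),
      (NormalFI.comap SemidirectProduct.inl j).N ≤ i.N := by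
  obtain ⟨d, hdpos, hd⟩ := exists_period φ i
  have hdvd := period_dvd φ i hd
  refine ⟨⟨torusSub φ i hd, torusSub_normal φ i hd hdvd,
    haveI := torusSub_finite_quotient φ i hd hdpos
    Subgroup.finiteIndex_of_finite_quotient⟩, ?_⟩
  intro x hx
  have : (SemidirectProduct.inl x : MappingTorusGrp n φ) ∈ torusSub φ i hd := hx
  rw [mem_torusSub φ i hd] at this
  exact charCore_le i (by simpa using this.1)

end TS

end Separable

section Final
variable {n : ℕ} {φ : MulAut (FreeGroup (Fin n))}

lemma stmt10_inj
    (Φ : ProfiniteCompletion (FreeGroup (Fin n)) →* ProfiniteCompletion (MappingTorusGrp n φ))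
    (hΦc : Continuous Φ)
    (hΦ : ∀ x : FreeGroup (Fin n),
      Φ (completionMap _ x) = completionMap _ (SemidirectProduct.inl x)) :
    Function.Injective Φ := by
  rw [injective_iff_map_eq_one]
  intro ξ hξ
  apply PCval_injective
  funext i
  obtain ⟨j, hj⟩ := exists_normalFI_comap_le φ i
  have h1 := coord_formula SemidirectProduct.inl Φ hΦc hΦ ξ j
  rw [hξ, PCval_one] at h1
  have h2' : NormalFI.qmap SemidirectProduct.inl j
      (PCval ξ (NormalFI.comap SemidirectProduct.inl j))
      = NormalFI.qmap SemidirectProduct.inl j 1 := by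
    rw [map_one]; exact h1.symm
  have h2 := NormalFI.qmap_injective SemidirectProduct.inl j h2'
  rw [← PCval_prop ξ (NormalFI.comap SemidirectProduct.inl j) i hj, h2, map_one, PCval_one]

lemma stmt10_surj
    (πhat : ProfiniteCompletion (MappingTorusGrp n φ) →* ProfiniteCompletion (Multiplicative ℤ))
    (hπc : Continuous πhat)
    (hπ : ∀ g : MappingTorusGrp n φ,
      πhat (completionMap _ g) = completionMap _ (SemidirectProduct.rightHom g)) :
    Function.Surjective πhat := by
  have hclosed : IsClosed (Set.range πhat) := (isCompact_range hπc).isClosed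
  have hsub : Set.range (completionMap (Multiplicative ℤ)) ⊆ Set.range πhat := by
    rintro _ ⟨z, rfl⟩
    exact ⟨completionMap _ (SemidirectProduct.inr z), by
      rw [hπ, SemidirectProduct.rightHom_inr]⟩
  intro y
  have : y ∈ closure (Set.range (completionMap (Multiplicative ℤ))) :=
    denseRange_completionMap y
  exact (closure_minimal hsub hclosed) this

lemma stmt10_ker
    (πhat : ProfiniteCompletion (MappingTorusGrp n φ) →* ProfiniteCompletion (Multiplicative ℤ))
    (hπc : Continuous πhat)
    (hπ : ∀ g : MappingTorusGrp n φ,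
      πhat (completionMap _ g) = completionMap _ (SemidirectProduct.rightHom g)) :
    (πhat.ker : Set (ProfiniteCompletion (MappingTorusGrp n φ))) =
      closure (Set.range (fun x : FreeGroup (Fin n) =>
        completionMap _ (SemidirectProduct.inl x))) := by
  apply Set.Subset.antisymm
  · -- ker ⊆ closure S
    intro ξ hξ
    have hξ1 : πhat ξ = 1 := hξ
    rw [mem_closure_iff]
    intro o ho hmem
    obtain ⟨V, hV, rfl⟩ := isOpen_induced_iff.mp ho
    obtain ⟨I, u, hu, hpi⟩ := isOpen_pi_iff.mp hV _ hmem
    obtain ⟨g, hg⟩ := QuotientGroup.mk_surjective (PCval ξ (NormalFI.inter I))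
    have hfij : (Subgroup.map SemidirectProduct.rightHom (NormalFI.inter I).N).FiniteIndex := by
      have hdvd := Subgroup.index_map_dvd (H := (NormalFI.inter I).N)
        (f := (SemidirectProduct.rightHom : MappingTorusGrp n φ →* Multiplicative ℤ))
        SemidirectProduct.rightHom_surjective
      constructor
      intro h0
      rw [h0] at hdvd
      exact (NormalFI.inter I).fi.index_ne_zero (zero_dvd_iff.mp hdvd)
    let j : NormalFI (Multiplicative ℤ) :=
      ⟨Subgroup.map SemidirectProduct.rightHom (NormalFI.inter I).N,
        Subgroup.normal_of_comm _, hfij⟩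
    let i' : NormalFI (MappingTorusGrp n φ) := NormalFI.comap SemidirectProduct.rightHom j
    have hle : (NormalFI.inter I).N ≤ i'.N :=
      Subgroup.le_comap_map
        (SemidirectProduct.rightHom : MappingTorusGrp n φ →* Multiplicative ℤ)
        (NormalFI.inter I).N
    have h1 := coord_formula SemidirectProduct.rightHom πhat hπc hπ ξ j
    rw [hξ1, PCval_one] at h1
    have h2' : NormalFI.qmap
          (SemidirectProduct.rightHom : MappingTorusGrp n φ →* Multiplicative ℤ) j (PCval ξ i')
        = NormalFI.qmap
          (SemidirectProduct.rightHom : MappingTorusGrp n φ →* Multiplicative ℤ) j 1 := by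
      rw [map_one]; exact h1.symm
    have h2 := NormalFI.qmap_injective
      (SemidirectProduct.rightHom : MappingTorusGrp n φ →* Multiplicative ℤ) j h2'
    have h3 : (QuotientGroup.mk g : MappingTorusGrp n φ ⧸ i'.N) = 1 := by
      rw [← PCval_prop ξ (NormalFI.inter I) i' hle, ← hg] at h2
      exact h2
    have h4 : g ∈ i'.N := (QuotientGroup.eq_one_iff g).mp h3
    obtain ⟨m, hm, hme⟩ := h4
    have hx : SemidirectProduct.rightHom (g * m⁻¹) = 1 := by
      rw [map_mul, map_inv, hme, mul_inv_cancel]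
    have : g * m⁻¹ ∈ (SemidirectProduct.inl :
        FreeGroup (Fin n) →* MappingTorusGrp n φ).range := by
      rw [SemidirectProduct.range_inl_eq_ker_rightHom]
      exact hx
    obtain ⟨y, hy⟩ := this
    refine ⟨completionMap _ (SemidirectProduct.inl y), ?_, ⟨y, rfl⟩⟩
    refine hpi fun i hi => ?_
    have he : PCval (completionMap _ (SemidirectProduct.inl y)) i = PCval ξ i := by
      rw [PCval_completionMap, hy]
      rw [← PCval_prop ξ (NormalFI.inter I) i (NormalFI.inter_le hi), ← hg]
      show (QuotientGroup.mk (g * m⁻¹) : MappingTorusGrp n φ ⧸ i.N) = QuotientGroup.mk g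
      rw [QuotientGroup.eq]
      have hgm : (g * m⁻¹)⁻¹ * g = m := by group
      rw [hgm]
      exact NormalFI.inter_le hi hm
    show PCval (completionMap _ (SemidirectProduct.inl y)) i ∈ u i
    rw [he]
    exact (hu i hi).2
  · -- closure S ⊆ ker
    refine closure_minimal ?_ ?_
    · rintro _ ⟨x, rfl⟩
      show _ ∈ πhat.ker
      rw [MonoidHom.mem_ker, hπ, SemidirectProduct.rightHom_inl, map_one]
    · have : (πhat.ker : Set (ProfiniteCompletion (MappingTorusGrp n φ)))
          = πhat ⁻¹' {1} := by
        ext z; simp [MonoidHom.mem_ker]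
      rw [this]
      exact isClosed_singleton.preimage hπc

lemma stmt10_range
    (Φ : ProfiniteCompletion (FreeGroup (Fin n)) →* ProfiniteCompletion (MappingTorusGrp n φ))
    (hΦc : Continuous Φ)
    (hΦ : ∀ x : FreeGroup (Fin n),
      Φ (completionMap _ x) = completionMap _ (SemidirectProduct.inl x)) :
    (Φ.range : Set (ProfiniteCompletion (MappingTorusGrp n φ))) =
      closure (Set.range (fun x : FreeGroup (Fin n) =>
        completionMap _ (SemidirectProduct.inl x))) := by
  apply Set.Subset.antisymm
  · rintro _ ⟨ξ, rfl⟩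
    have hdense : ξ ∈ closure (Set.range (completionMap (FreeGroup (Fin n)))) :=
      denseRange_completionMap ξ
    have hmem : Φ ξ ∈ Φ '' closure (Set.range (completionMap (FreeGroup (Fin n)))) :=
      ⟨ξ, hdense, rfl⟩
    have h2 := image_closure_subset_closure_image hΦc hmem
    have h3 : Φ '' Set.range (completionMap (FreeGroup (Fin n)))
        = Set.range (fun x : FreeGroup (Fin n) =>
            completionMap (MappingTorusGrp n φ) (SemidirectProduct.inl x)) := by
      ext z
      constructor
      · rintro ⟨_, ⟨x, rfl⟩, rfl⟩
        exact ⟨x, (hΦ x).symm⟩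
      · rintro ⟨x, rfl⟩
        exact ⟨completionMap _ x, ⟨x, rfl⟩, hΦ x⟩
    rwa [h3] at h2
  · refine closure_minimal ?_ ((isCompact_range hΦc).isClosed)
    rintro _ ⟨x, rfl⟩
    exact ⟨completionMap _ x, hΦ x⟩

end Final

/-- For `G = F ⋊_φ ℤ` with `F` a finitely generated free group, the induced
map `F̂ → Ĝ` is injective with image the closure of `F`, and `1 → F̂ → Ĝ → Ẑ → 1` is exact:
the kernel of the induced map `Ĝ → Ẑ` is exactly the closure of `F` in `Ĝ`. -/
theorem stmt_10 (n : ℕ) (φ : MulAut (FreeGroup (Fin n)))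
    (Φ : ProfiniteCompletion (FreeGroup (Fin n)) →* ProfiniteCompletion (MappingTorusGrp n φ))
    (hΦc : Continuous Φ)
    (hΦ : ∀ x : FreeGroup (Fin n),
      Φ (completionMap _ x) = completionMap _ (SemidirectProduct.inl x))
    (πhat : ProfiniteCompletion (MappingTorusGrp n φ) →* ProfiniteCompletion (Multiplicative ℤ))
    (hπc : Continuous πhat)
    (hπ : ∀ g : MappingTorusGrp n φ,
      πhat (completionMap _ g) = completionMap _ (SemidirectProduct.rightHom g)) :
    Function.Injective Φ ∧ Function.Surjective πhat ∧ Φ.range = πhat.ker ∧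
      (πhat.ker : Set (ProfiniteCompletion (MappingTorusGrp n φ))) =
        closure (Set.range (fun x : FreeGroup (Fin n) =>
          completionMap _ (SemidirectProduct.inl x))) := by
  refine ⟨stmt10_inj Φ hΦc hΦ, stmt10_surj πhat hπc hπ, ?_, stmt10_ker πhat hπc hπ⟩
  apply SetLike.ext'
  rw [stmt10_range Φ hΦc hΦ, stmt10_ker πhat hπc hπ]
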